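/- arXiv:1812.08325 — 3 statements merged into one kernel-verified Lean document; each statement's English description precedes it below -/
import Mathlib

section
/- For every monomial x₁^{a₁}⋯x_d^{a_d} of total degree K + 1 in ℝ^d, if every homogeneous polynomial of degree K + 1 decomposes as h(x) + |x|²·f(x) with h harmonic homogeneous of degree K + 1 and f a polynomial of degree ≤ K − 1, then x₁^{a₁}⋯x_d^{a_d} lies in the span of products V(x)·p(2|x|² − 1) where V is a harmonic homogeneous polynomial of degree ≤ 2(K+1) and p is a univariate polynomial of degree ≤ K + 1. -/
/-!
Every homogeneous polynomial `P` of degree `m` is a sum of terms `|x|^(2j) h` with `h` harmonic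
and homogeneous of degree `m - 2j` (Fischer decomposition). By induction, `ΔP` is such a sum in
degree `m - 2`. On each of its terms `F ↦ Δ(|x|² F)` acts as the nonzero scalar
`2(j+1)(d+2j+2s)`, so `ΔP = Δ(|x|² F)` for some `F` of the same shape, and
`P = (P - |x|² F) + |x|² F` with harmonic first summand. Finally `|x|^(2j) = p(2|x|² - 1)` for
`p(t) = ((t + 1)/2)^j`.
-/

open MvPolynomial

/-- A multivariate polynomial is harmonic if its Laplacian vanishes. -/
def IsHarmonic {d : ℕ} (P : MvPolynomial (Fin d) ℝ) : Prop :=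
  (∑ i : Fin d, pderiv i (pderiv i P)) = 0

namespace MvPolynomial

noncomputable def laplacian (σ R : Type*) [Fintype σ] [CommRing R] :
    MvPolynomial σ R →ₗ[R] MvPolynomial σ R :=
  ∑ i : σ, (pderiv i).toLinearMap ∘ₗ (pderiv i).toLinearMap

local notation "Δ" => laplacian _ _

section CommRing

variable {σ R : Type*} [Fintype σ] [CommRing R]

theorem laplacian_apply (P : MvPolynomial σ R) :
    Δ P = ∑ i : σ, pderiv i (pderiv i P) := by
  simp [laplacian, LinearMap.sum_apply]

variable (σ R) in
noncomputable def sumSq : MvPolynomial σ R := ∑ i : σ, X i ^ 2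

theorem isHomogeneous_sumSq : (sumSq σ R).IsHomogeneous 2 :=
  IsHomogeneous.sum _ _ _ fun _ _ => isHomogeneous_X_pow _ _

theorem pderiv_sumSq [DecidableEq σ] (i : σ) : pderiv i (sumSq σ R) = 2 * X i := by
  simp [sumSq, pderiv_X, Pi.single_apply]

theorem laplacian_sumSq : Δ (sumSq σ R) = 2 * Fintype.card σ := by
  classical
  simp [laplacian_apply, pderiv_sumSq, ← map_ofNat C 2, mul_comm]

theorem laplacian_mul (P Q : MvPolynomial σ R) :
    Δ (P * Q) = Δ P * Q +
      2 * ∑ i : σ, pderiv i P * pderiv i Q + P * Δ Q := by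
  have (i : σ) : pderiv i (pderiv i (P * Q)) =
      pderiv i (pderiv i P) * Q + 2 * (pderiv i P * pderiv i Q) + P * pderiv i (pderiv i Q) := by
    simp only [Derivation.leibniz, smul_eq_mul, map_add]
    ring
  simp only [laplacian_apply, this, Finset.sum_add_distrib, Finset.sum_mul, Finset.mul_sum]

theorem IsHomogeneous.laplacian {n : ℕ} {P : MvPolynomial σ R} (hP : P.IsHomogeneous n) :
    (Δ P).IsHomogeneous (n - 2) := by
  rw [laplacian_apply]
  exact IsHomogeneous.sum _ _ _ fun i _ => by simpa [Nat.sub_sub] using hP.pderiv.pderiv (i := i)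

theorem IsHomogeneous.laplacian_eq_zero {n : ℕ} {P : MvPolynomial σ R} (hP : P.IsHomogeneous n)
    (hn : n < 2) : Δ P = 0 := by
  rw [laplacian_apply]
  refine Finset.sum_eq_zero fun i _ => ?_
  have : (pderiv i P).IsHomogeneous 0 := by
    simpa [show n - 1 = 0 by omega] using hP.pderiv (i := i)
  rw [← totalDegree_zero_iff_isHomogeneous, totalDegree_eq_zero_iff_eq_C] at this
  rw [this, pderiv_C]

theorem IsHomogeneous.laplacian_sumSq_mul {n : ℕ} {Q : MvPolynomial σ R}
    (hQ : Q.IsHomogeneous n) :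
    Δ (sumSq σ R * Q) =
      (2 * Fintype.card σ + 4 * n) * Q + sumSq σ R * Δ Q := by
  classical
  have euler := hQ.sum_X_mul_pderiv
  simp only [laplacian_mul, laplacian_sumSq, pderiv_sumSq, mul_assoc, ← Finset.mul_sum, euler,
    nsmul_eq_mul]
  ring

theorem laplacian_sumSq_pow_succ_mul {s : ℕ} {h : MvPolynomial σ R}
    (hh : Δ h = 0) (hs : h.IsHomogeneous s) (j : ℕ) :
    Δ (sumSq σ R ^ (j + 1) * h) =
      (2 * (j + 1) * (Fintype.card σ + 2 * j + 2 * s) : ℕ) * (sumSq σ R ^ j * h) := by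
  induction j with
  | zero =>
    rw [zero_add, pow_one, hs.laplacian_sumSq_mul, hh]
    push_cast
    ring
  | succ j ih =>
    have hjs : (sumSq σ R ^ (j + 1) * h).IsHomogeneous (2 * (j + 1) + s) :=
      (isHomogeneous_sumSq.pow _).mul hs
    rw [pow_succ', mul_assoc, hjs.laplacian_sumSq_mul, ih]
    push_cast
    ring

variable (σ R) in
def sumSqPowMulHarmonic (m : ℕ) : Set (MvPolynomial σ R) :=
  {q | ∃ j s h, Δ h = 0 ∧ h.IsHomogeneous s ∧ 2 * j + s = m ∧ q = sumSq σ R ^ j * h}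

theorem span_sumSqPowMulHarmonic_le_homogeneousSubmodule (m : ℕ) :
    Submodule.span R (sumSqPowMulHarmonic σ R m) ≤ homogeneousSubmodule σ R m := by
  rw [Submodule.span_le]
  rintro _ ⟨j, s, h, -, hs, rfl, rfl⟩
  exact (isHomogeneous_sumSq.pow j).mul hs

theorem span_sumSqPowMulHarmonic_le_comap_mulLeft_sumSq (m : ℕ) :
    Submodule.span R (sumSqPowMulHarmonic σ R m) ≤
      (Submodule.span R (sumSqPowMulHarmonic σ R (m + 2))).comap
        (LinearMap.mulLeft R (sumSq σ R)) := by
  rw [Submodule.span_le]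
  rintro _ ⟨j, s, h, hh, hs, rfl, rfl⟩
  refine Submodule.subset_span ⟨j + 1, s, h, hh, hs, by ring, ?_⟩
  simp [pow_succ', mul_assoc]

end CommRing

section Field

variable {σ 𝕜 : Type*} [Fintype σ] [Nonempty σ] [Field 𝕜] [CharZero 𝕜]

theorem span_sumSqPowMulHarmonic_le_map_laplacian_comp_mulLeft_sumSq (m : ℕ) :
    Submodule.span 𝕜 (sumSqPowMulHarmonic σ 𝕜 m) ≤
      (Submodule.span 𝕜 (sumSqPowMulHarmonic σ 𝕜 m)).map
        (laplacian σ 𝕜 ∘ₗ LinearMap.mulLeft 𝕜 (sumSq σ 𝕜)) := by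
  rw [Submodule.span_le]
  rintro _ ⟨j, s, h, hh, hs, hm, rfl⟩
  set c : 𝕜 := ((2 * (j + 1) * (Fintype.card σ + 2 * j + 2 * s) : ℕ) : 𝕜)
  have hc : c ≠ 0 := Nat.cast_ne_zero.mpr (by positivity)
  refine ⟨c⁻¹ • (sumSq σ 𝕜 ^ j * h), Submodule.smul_mem _ _
    (Submodule.subset_span ⟨j, s, h, hh, hs, hm, rfl⟩), ?_⟩
  rw [LinearMap.comp_apply, LinearMap.mulLeft_apply, mul_smul_comm, map_smul, ← mul_assoc,
    ← pow_succ', laplacian_sumSq_pow_succ_mul hh hs, smul_eq_C_mul, ← mul_assoc, ← map_natCast C,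
    ← map_mul, inv_mul_cancel₀ hc, map_one, one_mul]

theorem IsHomogeneous.mem_span_sumSqPowMulHarmonic :
    ∀ {m : ℕ} {P : MvPolynomial σ 𝕜}, P.IsHomogeneous m →
      P ∈ Submodule.span 𝕜 (sumSqPowMulHarmonic σ 𝕜 m)
  | 0, P, hP | 1, P, hP =>
    Submodule.subset_span ⟨0, _, P, hP.laplacian_eq_zero (by norm_num), hP, rfl, by simp⟩
  | m + 2, P, hP => by
    obtain ⟨F, hF, hΔF⟩ := span_sumSqPowMulHarmonic_le_map_laplacian_comp_mulLeft_sumSq m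
      (hP.laplacian.mem_span_sumSqPowMulHarmonic)
    have hFm : F.IsHomogeneous m := span_sumSqPowMulHarmonic_le_homogeneousSubmodule m hF
    have harm : Δ (P - sumSq σ 𝕜 * F) = 0 := by
      rw [map_sub, ← hΔF, LinearMap.comp_apply, LinearMap.mulLeft_apply, sub_self]
    have hom : (P - sumSq σ 𝕜 * F).IsHomogeneous (m + 2) :=
      hP.sub (by simpa [add_comm] using isHomogeneous_sumSq.mul hFm)
    rw [← sub_add_cancel P (sumSq σ 𝕜 * F)]
    exact add_mem (Submodule.subset_span ⟨0, m + 2, _, harm, hom, by ring, by simp⟩)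
      (span_sumSqPowMulHarmonic_le_comap_mulLeft_sumSq m hF)

end Field

end MvPolynomial

namespace Polynomial

theorem exists_natDegree_le_aeval_two_mul_sub_one_eq_pow {𝕜 A : Type*} [Field 𝕜] [NeZero (2 : 𝕜)]
    [Ring A] [Algebra 𝕜 A] (x : A) (j : ℕ) :
    ∃ p : 𝕜[X], p.natDegree ≤ j ∧ aeval (2 * x - 1) p = x ^ j := by
  have hlin : (C 2⁻¹ * X + C 2⁻¹ : 𝕜[X]).natDegree ≤ 1 := natDegree_linear_le
  refine ⟨(C 2⁻¹ * X + C 2⁻¹) ^ j, by simpa using natDegree_pow_le_of_le j hlin, ?_⟩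
  simp only [map_pow, map_add, map_mul, aeval_C, aeval_X, mul_sub, ← mul_assoc]
  rw [← map_ofNat (algebraMap 𝕜 A) 2, ← map_mul, inv_mul_cancel₀ two_ne_zero, map_one, one_mul,
    mul_one, sub_add_cancel]

end Polynomial

theorem isHarmonic_iff_laplacian_eq_zero {d : ℕ} (P : MvPolynomial (Fin d) ℝ) :
    IsHarmonic P ↔ laplacian (Fin d) ℝ P = 0 := by
  rw [laplacian_apply, IsHarmonic]

theorem monomial_mem_span_harmonic_jacobi_general (d K : ℕ)
    (a : Fin d →₀ ℕ) (ha : (a.sum fun _ e => e) = K + 1) :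
    (monomial a (1 : ℝ)) ∈ Submodule.span ℝ
      {q : MvPolynomial (Fin d) ℝ | ∃ (l : ℕ) (V : MvPolynomial (Fin d) ℝ)
        (p : Polynomial ℝ), l ≤ 2 * (K + 1) ∧ IsHarmonic V ∧ V.IsHomogeneous l ∧
        p.natDegree ≤ K + 1 ∧
        q = V * Polynomial.aeval (2 * (∑ i : Fin d, X i ^ 2) - 1) p} := by
  obtain ⟨i, -⟩ : a.support.Nonempty :=
    Finsupp.support_nonempty_iff.mpr (by rintro rfl; simp at ha)
  have : Nonempty (Fin d) := ⟨i⟩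
  have hmon : (monomial a (1 : ℝ)).IsHomogeneous (K + 1) := isHomogeneous_monomial _ ha
  refine Submodule.span_le.mpr ?_ hmon.mem_span_sumSqPowMulHarmonic
  rintro _ ⟨j, s, h, hh, hs, hjs, rfl⟩
  obtain ⟨p, hp, hpx⟩ := Polynomial.exists_natDegree_le_aeval_two_mul_sub_one_eq_pow (𝕜 := ℝ)
    (sumSq (Fin d) ℝ) j
  exact Submodule.subset_span ⟨s, h, p, by omega, (isHarmonic_iff_laplacian_eq_zero h).mpr hh,
    hs, by omega, by rw [mul_comm, ← hpx]; rfl⟩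

/-- Inductive step of Lemma `l1`: if every homogeneous polynomial of degree `K+1`
decomposes as `h(x) + |x|² f(x)` with `h` harmonic homogeneous of degree `K+1` and
`f` of degree `≤ K-1`, then any monomial `x₁^{a₁}⋯x_d^{a_d}` of total degree `K+1`
lies in the span of products `V(x) · p(2|x|²-1)` with `V` harmonic homogeneous of
degree `≤ 2(K+1)` and `p` univariate of degree `≤ K+1`. -/
theorem monomial_mem_span_harmonic_jacobi (d K : ℕ)
    (a : Fin d →₀ ℕ) (ha : (a.sum fun _ e => e) = K + 1)
    (hdecomp : ∀ P : MvPolynomial (Fin d) ℝ, P.IsHomogeneous (K + 1) →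
      ∃ (h f : MvPolynomial (Fin d) ℝ), IsHarmonic h ∧ h.IsHomogeneous (K + 1) ∧
        f.totalDegree ≤ K - 1 ∧ P = h + (∑ i : Fin d, X i ^ 2) * f) :
    (monomial a (1 : ℝ)) ∈ Submodule.span ℝ
      {q : MvPolynomial (Fin d) ℝ | ∃ (l : ℕ) (V : MvPolynomial (Fin d) ℝ)
        (p : Polynomial ℝ), l ≤ 2 * (K + 1) ∧ IsHarmonic V ∧ V.IsHomogeneous l ∧
        p.natDegree ≤ K + 1 ∧
        q = V * Polynomial.aeval (2 * (∑ i : Fin d, X i ^ 2) - 1) p} :=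
  monomial_mem_span_harmonic_jacobi_general d K a ha
end

section
/- Let A be a real symmetric N×N matrix and b ∈ ℝ^N. Suppose after K steps of the Lanczos process one has an orthonormal matrix Q_K ∈ ℝ^{N×K} whose columns span the Krylov subspace 𝒦_K(A,b) = span{b, Ab, …, A^{K−1}b}, a symmetric tridiagonal T_K = Q_K^T A Q_K, and eigendecomposition T_K = VΛV^T with C = Q_K V. Then for every polynomial f of degree at most 2K − 1, b^T f(A) b = b^T C f(Λ) C^T b. -/
open Matrix Polynomial

private lemma aux_mulVec_col {m n p : Type*} [Fintype n] (M : Matrix m n ℝ)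
    (P : Matrix n p ℝ) (i : p) : M *ᵥ (Pᵀ i) = (M * P)ᵀ i := by
  ext k
  simp [mulVec, dotProduct, mul_apply, transpose_apply]

private lemma aux_dot_mulVec {m n : Type*} [Fintype m] [Fintype n]
    (Q : Matrix m n ℝ) (x : n → ℝ) (w : m → ℝ) :
    (Q *ᵥ x) ⬝ᵥ w = x ⬝ᵥ (Qᵀ *ᵥ w) := by
  rw [dotProduct_comm, dotProduct_mulVec, ← mulVec_transpose, dotProduct_comm]

private lemma aux_sum_mulVec {m n : Type*} [Fintype n] (s : Finset ℕ)
    (M : ℕ → Matrix m n ℝ) (v : n → ℝ) :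
    (∑ i ∈ s, M i) *ᵥ v = ∑ i ∈ s, (M i) *ᵥ v := by
  induction s using Finset.cons_induction with
  | empty => ext k; simp [Matrix.mulVec]
  | cons a s ha ih => simp [Finset.sum_insert ha, Matrix.add_mulVec, ih]

private lemma aux_dot_sum {n : Type*} [Fintype n] (s : Finset ℕ)
    (g : ℕ → n → ℝ) (v : n → ℝ) :
    v ⬝ᵥ (∑ i ∈ s, g i) = ∑ i ∈ s, v ⬝ᵥ g i := by
  induction s using Finset.cons_induction with
  | empty => simp
  | cons a s ha ih => simp [Finset.sum_insert ha, dotProduct_add, ih]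

/-- Exactness of the Lanczos process: if `Q` has orthonormal columns spanning the
Krylov subspace `𝒦_K(A,b)`, `T = QᵀAQ = VΛVᵀ` with `V` orthogonal and
`Λ = diag μ`, and `C = QV`, then `bᵀ f(A) b = bᵀ C f(Λ) Cᵀ b` for every
polynomial `f` of degree at most `2K-1`. -/
theorem lanczos_polynomial_exactness (N K : ℕ) (hK : 1 ≤ K)
    (A : Matrix (Fin N) (Fin N) ℝ) (hA : A.IsSymm) (b : Fin N → ℝ)
    (Q : Matrix (Fin N) (Fin K) ℝ) (hQ : Qᵀ * Q = 1)
    (hspan : Submodule.span ℝ {v : Fin N → ℝ | ∃ j < K, v = (A ^ j) *ᵥ b}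
      = Submodule.span ℝ (Set.range Qᵀ))
    (V : Matrix (Fin K) (Fin K) ℝ) (hV : Vᵀ * V = 1) (μ : Fin K → ℝ)
    (hT : Qᵀ * A * Q = V * Matrix.diagonal μ * Vᵀ)
    (f : Polynomial ℝ) (hf : f.natDegree ≤ 2 * K - 1) :
    b ⬝ᵥ ((Polynomial.aeval A f) *ᵥ b) =
      b ⬝ᵥ ((Q * V * Matrix.diagonal (fun i => f.eval (μ i)) * (Q * V)ᵀ) *ᵥ b) := by
  set T : Matrix (Fin K) (Fin K) ℝ := Qᵀ * A * Q with hTdef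
  have hVV' : V * Vᵀ = 1 := mul_eq_one_comm.mp hV
  -- projection property
  have hproj : ∀ v ∈ Submodule.span ℝ (Set.range Qᵀ), Q *ᵥ (Qᵀ *ᵥ v) = v := by
    intro v hv
    induction hv using Submodule.span_induction with
    | mem x hx =>
        obtain ⟨i, rfl⟩ := hx
        rw [aux_mulVec_col, aux_mulVec_col, hQ]
        simp
    | zero => simp
    | add x y _ _ hx hy => simp [mulVec_add, hx, hy]
    | smul c x _ hx => simp [mulVec_smul, hx]
  -- Krylov vectors are projected to themselves
  have hkry : ∀ j < K, Q *ᵥ (Qᵀ *ᵥ ((A ^ j) *ᵥ b)) = (A ^ j) *ᵥ b := by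
    intro j hj
    refine hproj _ ?_
    rw [← hspan]
    exact Submodule.subset_span ⟨j, hj, rfl⟩
  -- key recursion
  have hrec : ∀ j ≤ K, Qᵀ *ᵥ ((A ^ j) *ᵥ b) = (T ^ j) *ᵥ (Qᵀ *ᵥ b) := by
    intro j hj
    induction j with
    | zero => simp
    | succ j ih =>
        have hjK : j < K := hj
        have ihj := ih (le_of_lt hjK)
        have h1 : (A ^ (j + 1)) *ᵥ b = A *ᵥ ((A ^ j) *ᵥ b) := by
          rw [pow_succ', ← mulVec_mulVec]
        rw [h1, ← hkry j hjK, ihj]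
        simp only [mulVec_mulVec, pow_succ', hTdef, Matrix.mul_assoc]
  have hTsymm : T.IsSymm := by
    rw [Matrix.IsSymm, hTdef, Matrix.transpose_mul, Matrix.transpose_mul,
      Matrix.transpose_transpose, hA.eq, Matrix.mul_assoc]
  -- monomial exactness
  have hmono : ∀ m ≤ 2 * K - 1,
      b ⬝ᵥ ((A ^ m) *ᵥ b) = (Qᵀ *ᵥ b) ⬝ᵥ ((T ^ m) *ᵥ (Qᵀ *ᵥ b)) := by
    intro m hm
    set i := min m (K - 1) with hidef
    have hiK : i < K := lt_of_le_of_lt (min_le_right _ _) (Nat.sub_lt hK one_pos)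
    have hjK : m - i ≤ K := by omega
    have hsplit : i + (m - i) = m := by omega
    have h1 : ((A ^ i) *ᵥ b) ⬝ᵥ ((A ^ (m - i)) *ᵥ b) = b ⬝ᵥ ((A ^ m) *ᵥ b) := by
      rw [aux_dot_mulVec, (hA.pow i).eq, mulVec_mulVec, ← pow_add, hsplit]
    calc b ⬝ᵥ ((A ^ m) *ᵥ b)
        = ((A ^ i) *ᵥ b) ⬝ᵥ ((A ^ (m - i)) *ᵥ b) := h1.symm
      _ = (Q *ᵥ (Qᵀ *ᵥ ((A ^ i) *ᵥ b))) ⬝ᵥ ((A ^ (m - i)) *ᵥ b) := by rw [hkry i hiK]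
      _ = (Qᵀ *ᵥ ((A ^ i) *ᵥ b)) ⬝ᵥ (Qᵀ *ᵥ ((A ^ (m - i)) *ᵥ b)) := by
            rw [aux_dot_mulVec]
      _ = ((T ^ i) *ᵥ (Qᵀ *ᵥ b)) ⬝ᵥ ((T ^ (m - i)) *ᵥ (Qᵀ *ᵥ b)) := by
            rw [hrec i (le_of_lt hiK), hrec (m - i) hjK]
      _ = (Qᵀ *ᵥ b) ⬝ᵥ ((T ^ m) *ᵥ (Qᵀ *ᵥ b)) := by
            rw [aux_dot_mulVec, (hTsymm.pow i).eq, mulVec_mulVec, ← pow_add, hsplit]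
  -- T powers via eigendecomposition
  have hTpow : ∀ m : ℕ, T ^ m = V * Matrix.diagonal (fun i => μ i ^ m) * Vᵀ := by
    intro m
    induction m with
    | zero => simp [hVV']
    | succ m ih =>
        rw [pow_succ, ih, hT]
        have hd : (Matrix.diagonal fun i => μ i ^ (m + 1)) =
            (Matrix.diagonal fun i => μ i ^ m) * Matrix.diagonal μ := by
          simp [Matrix.diagonal_mul_diagonal, pow_succ]
        rw [hd]
        calc V * (Matrix.diagonal fun i => μ i ^ m) * Vᵀ * (V * Matrix.diagonal μ * Vᵀ)
            = V * ((Matrix.diagonal fun i => μ i ^ m) * (Vᵀ * V) * Matrix.diagonal μ) * Vᵀ := by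
              noncomm_ring
          _ = V * ((Matrix.diagonal fun i => μ i ^ m) * Matrix.diagonal μ) * Vᵀ := by
              rw [hV, Matrix.mul_one]
          _ = _ := by noncomm_ring
  -- now expand f
  have hrhsdiag : Matrix.diagonal (fun i => f.eval (μ i)) =
      ∑ m ∈ Finset.range (f.natDegree + 1), f.coeff m • Matrix.diagonal (fun i => μ i ^ m) := by
    ext i j
    rcases eq_or_ne i j with rfl | h
    · simp [Matrix.sum_apply, Polynomial.eval_eq_sum_range, Matrix.smul_apply, smul_eq_mul]
    · simp [Matrix.sum_apply, Matrix.diagonal_apply_ne _ h, Matrix.smul_apply]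
  rw [Polynomial.aeval_eq_sum_range (p := f) A, hrhsdiag]
  rw [aux_sum_mulVec, aux_dot_sum]
  have hRHS : (Q * V * (∑ m ∈ Finset.range (f.natDegree + 1),
        f.coeff m • Matrix.diagonal (fun i => μ i ^ m)) * (Q * V)ᵀ) *ᵥ b =
      ∑ m ∈ Finset.range (f.natDegree + 1),
        f.coeff m • ((Q * (T ^ m) * Qᵀ) *ᵥ b) := by
    rw [Matrix.mul_sum, Matrix.sum_mul, aux_sum_mulVec]
    refine Finset.sum_congr rfl fun m _ => ?_
    rw [Matrix.mul_smul, Matrix.smul_mul, Matrix.smul_mulVec, hTpow m,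
      Matrix.transpose_mul]
    simp only [Matrix.mul_assoc]
  rw [hRHS, aux_dot_sum]
  refine Finset.sum_congr rfl fun m hm => ?_
  have hmle : m ≤ 2 * K - 1 := le_trans (Nat.lt_succ_iff.mp (Finset.mem_range.mp hm)) hf
  rw [Matrix.smul_mulVec, dotProduct_smul, dotProduct_smul, hmono m hmle]
  congr 1
  rw [← mulVec_mulVec, ← mulVec_mulVec]
  conv_rhs => rw [dotProduct_comm, aux_dot_mulVec, dotProduct_comm]
end

section
/- With quadrature nodes λ₁,…,λ_K (eigenvalues of T_K) and weights s_i = ((C^T b)_i)², if the original quadrature I_w = Σ_{i=1}^N f(x_i) w_i satisfies |I − I_w| ≤ ε for the exact integral I, and f is a polynomial of degree at most 2K − 1, then the reduced quadrature I_s = Σ_{i=1}^K f(λ_i) s_i satisfies I_s = I_w, and hence |I − I_s| ≤ ε. -/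
/-!
Set `C = QV`. Then `CᵀC = 1`, `CCᵀ = QQᵀ` fixes the Krylov vectors `Aʲb` (`j < K`), and
`CᵀAC = Λ`. Induction on `j` gives `C Λʲ Cᵀb = Aʲb` for `j < K`; writing `m = j + r + j` with
`r ∈ {0, 1}`, symmetry of `A` and `Λ` then gives
`bᵀAᵐb = (Aʲb)ᵀAʳ(Aʲb) = (Cᵀb)ᵀΛᵐ(Cᵀb)` for every `m < 2K`, hence for every polynomial of
degree `< 2K` in place of `Xᵐ`. For the diagonal matrices `A` and `Λ` these two quadratic forms
are exactly `I_w` and `I_s`.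
-/

open Matrix Polynomial

namespace Matrix

variable {n k R : Type*} [Fintype n] [Fintype k] [CommSemiring R]

theorem aeval_diagonal [DecidableEq n] (d : n → R) (p : R[X]) :
    aeval (diagonal d) p = diagonal fun i ↦ p.eval (d i) := by
  rw [← diagonalAlgHom_apply (R := R), aeval_algHom_apply, aeval_pi_apply]
  rfl

theorem dotProduct_diagonal_mulVec_self [DecidableEq n] (d v : n → R) :
    v ⬝ᵥ (diagonal d *ᵥ v) = ∑ i, d i * v i ^ 2 := by
  simp only [dotProduct, mulVec_diagonal]
  exact Finset.sum_congr rfl fun i _ ↦ by ring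

theorem IsSymm.dotProduct_pow_add_mulVec [DecidableEq n] {A : Matrix n n R} (hA : A.IsSymm)
    (j r : ℕ) (v w : n → R) :
    v ⬝ᵥ (A ^ (j + r + j) *ᵥ w) = (A ^ j *ᵥ v) ⬝ᵥ (A ^ r *ᵥ (A ^ j *ᵥ w)) := by
  rw [pow_add, pow_add, ← mulVec_mulVec, ← mulVec_mulVec, dotProduct_comm (A ^ j *ᵥ v),
    ← dotProduct_transpose_mulVec, (hA.pow j).eq, dotProduct_comm]

omit [Fintype k] in
theorem IsSymm.transpose_mul_mul {A : Matrix n n R} (hA : A.IsSymm) (C : Matrix n k R) :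
    (Cᵀ * A * C).IsSymm := by
  rw [IsSymm, transpose_mul, transpose_mul, transpose_transpose, hA.eq, Matrix.mul_assoc]

theorem mulVec_dotProduct_mulVec_mulVec (C : Matrix n k R) (B : Matrix n n R) (u v : k → R) :
    (C *ᵥ u) ⬝ᵥ (B *ᵥ (C *ᵥ v)) = u ⬝ᵥ ((Cᵀ * B * C) *ᵥ v) := by
  rw [dotProduct_comm, ← dotProduct_transpose_mulVec]
  simp only [mulVec_mulVec, Matrix.mul_assoc]

theorem mulVec_transpose_mulVec_of_mem_span [DecidableEq k] {C : Matrix n k R}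
    (hC : Cᵀ * C = 1) {v : n → R} (hv : v ∈ Submodule.span R (Set.range Cᵀ)) :
    C *ᵥ (Cᵀ *ᵥ v) = v := by
  obtain ⟨c, rfl⟩ : v ∈ LinearMap.range C.mulVecLin := by rwa [range_mulVecLin]
  rw [mulVecLin_apply, mulVec_mulVec c Cᵀ, hC, one_mulVec]

section Compression

variable [DecidableEq n] [DecidableEq k] {A : Matrix n n R} {C : Matrix n k R} {b : n → R}
  {K : ℕ}

theorem mulVec_pow_compression_mulVec
    (hproj : ∀ j < K, C *ᵥ (Cᵀ *ᵥ (A ^ j *ᵥ b)) = A ^ j *ᵥ b) {j : ℕ} (hj : j < K) :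
    C *ᵥ ((Cᵀ * A * C) ^ j *ᵥ (Cᵀ *ᵥ b)) = A ^ j *ᵥ b := by
  induction j with
  | zero => simpa using hproj 0 hj
  | succ j ih =>
    calc C *ᵥ ((Cᵀ * A * C) ^ (j + 1) *ᵥ (Cᵀ *ᵥ b))
        = C *ᵥ (Cᵀ *ᵥ (A *ᵥ (C *ᵥ ((Cᵀ * A * C) ^ j *ᵥ (Cᵀ *ᵥ b))))) := by
          simp only [pow_succ', ← mulVec_mulVec, Matrix.mul_assoc]
      _ = A ^ (j + 1) *ᵥ b := by
          rw [ih (by omega), mulVec_mulVec b A, ← pow_succ', hproj (j + 1) hj]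

theorem dotProduct_pow_compression_mulVec (hA : A.IsSymm) (hC : Cᵀ * C = 1)
    (hproj : ∀ j < K, C *ᵥ (Cᵀ *ᵥ (A ^ j *ᵥ b)) = A ^ j *ᵥ b) {m : ℕ} (hm : m < 2 * K) :
    (Cᵀ *ᵥ b) ⬝ᵥ ((Cᵀ * A * C) ^ m *ᵥ (Cᵀ *ᵥ b)) = b ⬝ᵥ (A ^ m *ᵥ b) := by
  set M := Cᵀ * A * C
  obtain ⟨j, r, rfl, hr, hj⟩ : ∃ j r, m = j + r + j ∧ r < 2 ∧ j < K :=
    ⟨m / 2, m % 2, by omega, Nat.mod_lt _ two_pos, by omega⟩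
  have hMr : Cᵀ * A ^ r * C = M ^ r := by
    interval_cases r <;> simp [M, hC]
  calc (Cᵀ *ᵥ b) ⬝ᵥ (M ^ (j + r + j) *ᵥ (Cᵀ *ᵥ b))
      = (M ^ j *ᵥ (Cᵀ *ᵥ b)) ⬝ᵥ ((Cᵀ * A ^ r * C) *ᵥ (M ^ j *ᵥ (Cᵀ *ᵥ b))) := by
        rw [(hA.transpose_mul_mul C).dotProduct_pow_add_mulVec, hMr]
    _ = (C *ᵥ (M ^ j *ᵥ (Cᵀ *ᵥ b))) ⬝ᵥ (A ^ r *ᵥ (C *ᵥ (M ^ j *ᵥ (Cᵀ *ᵥ b)))) :=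
        (mulVec_dotProduct_mulVec_mulVec _ _ _ _).symm
    _ = (A ^ j *ᵥ b) ⬝ᵥ (A ^ r *ᵥ (A ^ j *ᵥ b)) := by
        rw [mulVec_pow_compression_mulVec hproj hj]
    _ = b ⬝ᵥ (A ^ (j + r + j) *ᵥ b) := (hA.dotProduct_pow_add_mulVec j r b b).symm

theorem dotProduct_aeval_compression_mulVec (hA : A.IsSymm) (hC : Cᵀ * C = 1)
    (hproj : ∀ j < K, C *ᵥ (Cᵀ *ᵥ (A ^ j *ᵥ b)) = A ^ j *ᵥ b) {p : R[X]}
    (hp : p.natDegree < 2 * K) :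
    (Cᵀ *ᵥ b) ⬝ᵥ (aeval (Cᵀ * A * C) p *ᵥ (Cᵀ *ᵥ b)) = b ⬝ᵥ (aeval A p *ᵥ b) := by
  simp only [aeval_eq_sum_range' hp, sum_mulVec, dotProduct_sum, smul_mulVec, dotProduct_smul]
  exact Finset.sum_congr rfl fun m hm ↦ by
    rw [dotProduct_pow_compression_mulVec hA hC hproj (Finset.mem_range.mp hm)]

end Compression

end Matrix

/-- Reduced quadrature from the Lanczos process: with `A = diag(x)`,
`b = (√w₁,…,√w_N)ᵀ`, nodes `λᵢ = μ i` (eigenvalues of `T_K`) and weights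
`sᵢ = ((Cᵀb)ᵢ)²` where `C = QV`, if `|I - I_w| ≤ ε` with
`I_w = Σ f(xᵢ) wᵢ`, then for polynomials `f` of degree `≤ 2K-1` the reduced
quadrature `I_s = Σ f(λᵢ) sᵢ` satisfies `I_s = I_w`, hence `|I - I_s| ≤ ε`. -/
theorem lanczos_quadrature_exactness (N K : ℕ) (hK : 1 ≤ K)
    (x w : Fin N → ℝ) (hw : ∀ i, 0 < w i)
    (b : Fin N → ℝ) (hb : ∀ i, b i = Real.sqrt (w i))
    (Q : Matrix (Fin N) (Fin K) ℝ) (hQ : Qᵀ * Q = 1)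
    (hspan : Submodule.span ℝ
        {v : Fin N → ℝ | ∃ j < K, v = ((Matrix.diagonal x) ^ j) *ᵥ b}
      = Submodule.span ℝ (Set.range Qᵀ))
    (V : Matrix (Fin K) (Fin K) ℝ) (hV : Vᵀ * V = 1) (μ : Fin K → ℝ)
    (hT : Qᵀ * Matrix.diagonal x * Q = V * Matrix.diagonal μ * Vᵀ)
    (I ε : ℝ) (f : Polynomial ℝ) (hf : f.natDegree ≤ 2 * K - 1)
    (hIw : |I - ∑ i, f.eval (x i) * w i| ≤ ε) :
    (∑ i, f.eval (μ i) * ((Q * V)ᵀ *ᵥ b) i ^ 2) = ∑ i, f.eval (x i) * w i ∧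
    |I - ∑ i, f.eval (μ i) * ((Q * V)ᵀ *ᵥ b) i ^ 2| ≤ ε := by
  have hVVt : V * Vᵀ = 1 := mul_eq_one_comm.mp hV
  have hC : (Q * V)ᵀ * (Q * V) = 1 := by
    rw [transpose_mul, Matrix.mul_assoc, ← Matrix.mul_assoc Qᵀ, hQ, Matrix.one_mul, hV]
  have hCAC : (Q * V)ᵀ * diagonal x * (Q * V) = diagonal μ := by
    calc (Q * V)ᵀ * diagonal x * (Q * V) = Vᵀ * (Qᵀ * diagonal x * Q) * V := by
          simp only [transpose_mul, Matrix.mul_assoc]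
      _ = (Vᵀ * V) * diagonal μ * (Vᵀ * V) := by rw [hT]; simp only [Matrix.mul_assoc]
      _ = diagonal μ := by rw [hV, Matrix.one_mul, Matrix.mul_one]
  have hproj (j : ℕ) (hj : j < K) :
      (Q * V) *ᵥ ((Q * V)ᵀ *ᵥ (diagonal x ^ j *ᵥ b)) = diagonal x ^ j *ᵥ b := by
    rw [mulVec_mulVec, transpose_mul, Matrix.mul_assoc, ← Matrix.mul_assoc V, hVVt,
      Matrix.one_mul, ← mulVec_mulVec]
    exact mulVec_transpose_mulVec_of_mem_span hQ (hspan ▸ Submodule.subset_span ⟨j, hj, rfl⟩)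
  have hexact := dotProduct_aeval_compression_mulVec (isSymm_diagonal x) hC hproj
    (p := f) (by omega)
  rw [hCAC, aeval_diagonal, aeval_diagonal, dotProduct_diagonal_mulVec_self,
    dotProduct_diagonal_mulVec_self] at hexact
  have hIs : ∑ i, f.eval (μ i) * ((Q * V)ᵀ *ᵥ b) i ^ 2 = ∑ i, f.eval (x i) * w i := by
    simp only [hexact, hb, Real.sq_sqrt (hw _).le]
  exact ⟨hIs, hIs ▸ hIw⟩
end
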